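/- (Theorem 3.3 of the paper, combinatorial form.) Let D = (V, A) be a finite directed graph with A ≠ ∅, and let m be the maximum of |W| over all W ⊆ V such that either W is a connected pair, or |W| ≥ 3 and W can be generated from a connected pair. If D contains at least one directed sub-block, then m equals the maximum cardinality of a set U ⊆ V such that D[U] is a transmission block; if D contains no directed sub-block, then m = 2. -/

import Mathlib

open Set

variable {V : Type*}

/-- One arc step within the induced subgraph on the vertex set `S`. -/
def StepIn (A : V → V → Prop) (S : Set V) (u v : V) : Prop :=
  u ∈ S ∧ v ∈ S ∧ A u v

/-- `v` is reachable from `u` by a directed path in the induced subgraph on `S`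
(every vertex is reachable from itself, provided it lies in `S`). -/
def ReachIn (A : V → V → Prop) (S : Set V) (u v : V) : Prop :=
  u ∈ S ∧ Relation.ReflTransGen (StepIn A S) u v

/-- `IN(X)`: the set of vertices from which some member of `X` is reachable,
computed in the induced subgraph on `S`. -/
def InSet (A : V → V → Prop) (S : Set V) (X : Set V) : Set V :=
  {u | ∃ x ∈ X, ReachIn A S u x}

/-- `Z` is dynamically partitioning with respect to `X` and `Y`:
`IN(X) ∩ IN(Y) = ∅` computed in the induced subgraph `D − Z`. -/
def DynPart (A : V → V → Prop) (X Y Z : Set V) : Prop :=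
  InSet A Zᶜ X ∩ InSet A Zᶜ Y = ∅

/-- `StepsLe r n u v`: `v` can be reached from `u` in at most `n` `r`-steps. -/
def StepsLe (r : V → V → Prop) : ℕ → V → V → Prop
  | 0, u, v => u = v
  | n + 1, u, v => u = v ∨ ∃ w, r u w ∧ StepsLe r n w v

/-- `v` is reachable from `u` by a directed path using at most `n` arcs
in the induced subgraph on `S`. -/
def ReachInLe (A : V → V → Prop) (S : Set V) (n : ℕ) (u v : V) : Prop :=
  u ∈ S ∧ StepsLe (StepIn A S) n u v

/-- `IN_a(X)` computed in the induced subgraph on `S`. -/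
def InSetLe (A : V → V → Prop) (S : Set V) (a : ℕ) (X : Set V) : Set V :=
  {u | ∃ x ∈ X, ReachInLe A S a u x}

/-- The vertex `i` is cycle-partitioning at order `x` with respect to `X` and `Y`:
`IN_a(X) ∩ IN_b(Y) = ∅` in `D − {i}` for all `a + b = x`. -/
def CyclePart (A : V → V → Prop) (X Y : Set V) (i : V) (x : ℕ) : Prop :=
  ∀ a b : ℕ, a + b = x → InSetLe A {i}ᶜ a X ∩ InSetLe A {i}ᶜ b Y = ∅

/-- One adjacency step of the underlying (simple) graph of `D[W]`. -/
def UStep (A : V → V → Prop) (W : Set V) (u v : V) : Prop :=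
  u ∈ W ∧ v ∈ W ∧ u ≠ v ∧ (A u v ∨ A v u)

/-- The underlying graph of `D[W]` is connected. -/
def UConnected (A : V → V → Prop) (W : Set V) : Prop :=
  W.Nonempty ∧ ∀ u ∈ W, ∀ v ∈ W, Relation.ReflTransGen (UStep A W) u v

/-- The underlying graph of `D[W]` is biconnected: at least 3 vertices, connected,
and deleting any single vertex leaves a connected graph. -/
def Biconnected (A : V → V → Prop) (W : Set V) : Prop :=
  3 ≤ W.ncard ∧ UConnected A W ∧ ∀ v ∈ W, UConnected A (W \ {v})

/-- `D[W]` is a directed sub-block: some vertex of `W` is reachable in `D[W]` from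
every other vertex of `W`, and the underlying graph of `D[W]` is biconnected. -/
def DirectedSubBlock (A : V → V → Prop) (W : Set V) : Prop :=
  (∃ i ∈ W, ∀ j ∈ W, ReachIn A W j i) ∧ Biconnected A W

/-- A directed sub-block is a transmission block iff it is maximal. -/
def TransmissionBlock (A : V → V → Prop) (W : Set V) : Prop :=
  DirectedSubBlock A W ∧ ∀ U : Set V, W ⊂ U → ¬ DirectedSubBlock A U

/-- A connected pair: a two-element set `{i, j}` with an arc between `i` and `j`. -/
def ConnectedPair (A : V → V → Prop) (W : Set V) : Prop :=
  ∃ i j : V, i ≠ j ∧ W = {i, j} ∧ (A i j ∨ A j i)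

/-- `W'` is obtained from `W` by one exact generation step. -/
def ExactStep (A : V → V → Prop) (W W' : Set V) : Prop :=
  ∃ k, k ∉ W ∧ W' = W ∪ {k} ∧ ∃ j ∈ W, A k j ∧ ¬ DynPart A {k} (W \ {j}) {j}

/-- `W` is the last term of a finite chain of exact generation steps whose
first term is a connected pair. -/
def GeneratedFromPair (A : V → V → Prop) (W : Set V) : Prop :=
  ∃ P : Set V, ConnectedPair A P ∧ Relation.ReflTransGen (ExactStep A) P W

/-- `W'` is obtained from `W` by one order-`x` cycle generation step. -/
def CycleStep (A : V → V → Prop) (x : ℕ) (W W' : Set V) : Prop :=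
  ∃ k, k ∉ W ∧ W' = W ∪ {k} ∧ ∃ j ∈ W, A k j ∧ ¬ CyclePart A {k} (W \ {j}) j x

/-- `W` is the last term of a finite chain of order-`x` cycle generation steps
whose first term is a connected pair. -/
def XGenerable (A : V → V → Prop) (x : ℕ) (W : Set V) : Prop :=
  ∃ P : Set V, ConnectedPair A P ∧ Relation.ReflTransGen (CycleStep A x) P W

/-!
A directed sub-block `W` with sink `i` is generated from a connected pair `{x, i}`: given
`i ∈ Wt ⊊ W`, take an arc `k₀ → j` of a path into `Wt` and let `X` be the set of vertices of
`W - j` that reach `Wt - j` inside `W - j`. Either `k₀ ∈ X`, and `k₀` is a valid new vertex, or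
the connectivity of `W - j` gives an arc from `X` into the rest `Z` of `W - j`; paths towards `i`
can leave `Z` only through `j`, so the last vertex of `Z` on such a path is a valid new vertex.

Conversely, an exact generation step `W ↦ W ∪ {k}` out of a set `W` lying inside a directed
sub-block (or a connected pair) `Y` is witnessed by a vertex `u` reaching both `k` and some
`w ∈ W - j` in `D - j`. The vertices outside `Y` on these paths reach the sink of `Y`, and after
pruning the parts that hang off a single cut vertex they form, together with `Y`, a larger
directed sub-block. So every generable set lies in a directed sub-block and every directed
sub-block is generable: `m` is the size of a largest directed sub-block, which is a transmission
block, or `2` if there is none.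
-/

namespace Relation.ReflTransGen

variable {α : Type*} {r r' : α → α → Prop} {a b : α}

lemma exists_step_into {T : Set α} (h : ReflTransGen r a b) (ha : a ∉ T) (hb : b ∈ T) :
    ∃ p ∉ T, ∃ q ∈ T, r p q := by
  induction h with
  | refl => exact absurd hb ha
  | @tail c d _ hcd ih =>
    by_cases hc : c ∈ T
    · exact ih hc
    · exact ⟨c, hc, d, hb, hcd⟩

lemma reroute {C : Set α} {z : α} (h : ReflTransGen r a b) (ha : a ∉ C) (hb : b ∉ C)
    (hr : ∀ x y, r x y → x ∉ C → y ∉ C → r' x y)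
    (henter : ∀ x y, r x y → x ∉ C → y ∈ C → x = z)
    (hexit : ∀ x y, r x y → x ∈ C → y ∉ C → y = z) :
    ReflTransGen r' a b := by
  have key : ∀ {c}, ReflTransGen r a c →
      (c ∉ C → ReflTransGen r' a c) ∧ (c ∈ C → ReflTransGen r' a z) := by
    intro c hc
    induction hc with
    | refl => exact ⟨fun _ => .refl, fun h => absurd h ha⟩
    | @tail c d _ hcd ih =>
      by_cases hcC : c ∈ C <;> refine ⟨fun hd => ?_, fun hd => ?_⟩
      · exact hexit c d hcd hcC hd ▸ ih.2 hcC
      · exact ih.2 hcC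
      · exact (ih.1 hcC).tail (hr c d hcd hcC hd)
      · exact henter c d hcd hcC hd ▸ ih.1 hcC
  exact (key h).1 hb

end Relation.ReflTransGen

open Relation

section Reach

variable {A : V → V → Prop} {S T : Set V} {u v w : V}

lemma ReachIn.refl (hu : u ∈ S) : ReachIn A S u u := ⟨hu, .refl⟩

lemma ReachIn.single (hu : u ∈ S) (hv : v ∈ S) (h : A u v) : ReachIn A S u v :=
  ⟨hu, .single ⟨hu, hv, h⟩⟩

lemma ReachIn.head (h₁ : StepIn A S u v) (h₂ : ReachIn A S v w) : ReachIn A S u w :=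
  ⟨h₁.1, .head h₁ h₂.2⟩

lemma ReachIn.trans (h₁ : ReachIn A S u v) (h₂ : ReachIn A S v w) : ReachIn A S u w :=
  ⟨h₁.1, h₁.2.trans h₂.2⟩

lemma ReachIn.mem_right (h : ReachIn A S u v) : v ∈ S := by
  obtain ⟨hu, h⟩ := h
  induction h with
  | refl => exact hu
  | tail _ hstep _ => exact hstep.2.1

lemma ReachIn.mono (hST : S ⊆ T) (h : ReachIn A S u v) : ReachIn A T u v :=
  ⟨hST h.1, ReflTransGen.mono (fun _ _ hs => ⟨hST hs.1, hST hs.2.1, hs.2.2⟩) _ _ h.2⟩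

lemma ReachIn.between (h : ReachIn A S u v) :
    ReachIn A {y | ReachIn A S u y ∧ ReachIn A S y v} u v := by
  obtain ⟨hu, h⟩ := h
  induction h using ReflTransGen.head_induction_on with
  | refl => exact .refl ⟨.refl hu, .refl hu⟩
  | @head a c hac hcv ih =>
    have hac' : ReachIn A S a c := .single hu hac.2.1 hac.2.2
    have hc : ReachIn A {y | ReachIn A S a y ∧ ReachIn A S y v} c v :=
      (ih hac.2.1).mono fun y hy => ⟨hac'.trans hy.1, hy.2⟩
    exact ReachIn.head ⟨⟨.refl hu, hu, .head hac hcv⟩, hc.1, hac.2.2⟩ hc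

lemma ReachIn.exists_arc_out {M : Set V} (h : ReachIn A S u v) (hu : u ∈ M)
    (hv : v ∉ M) : ∃ x y, ReachIn A M u x ∧ y ∈ S \ M ∧ A x y := by
  obtain ⟨-, h⟩ := h
  induction h using ReflTransGen.head_induction_on with
  | refl => exact absurd hu hv
  | @head a c hac _ ih =>
    by_cases hc : c ∈ M
    · obtain ⟨x, y, hcx, hy, hxy⟩ := ih hc
      exact ⟨x, y, ReachIn.head ⟨hu, hc, hac.2.2⟩ hcx, hy, hxy⟩
    · exact ⟨a, c, .refl hu, ⟨hac.2.1, hc⟩, hac.2.2⟩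

lemma mem_inSet_of_stepIn {X : Set V} (huv : StepIn A S u v) (hv : v ∈ InSet A S X) :
    u ∈ InSet A S X :=
  let ⟨x, hx, hvx⟩ := hv
  ⟨x, hx, .head huv hvx⟩

lemma not_dynPart_singleton_iff {X : Set V} {j k : V} :
    ¬ DynPart A {k} X {j} ↔ ∃ u, ReachIn A {j}ᶜ u k ∧ ∃ x ∈ X, ReachIn A {j}ᶜ u x := by
  simp only [DynPart, InSet, ← nonempty_iff_ne_empty, Set.Nonempty, mem_inter_iff, mem_ofPred_eq,
    mem_singleton_iff, exists_eq_left]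

end Reach

section Underlying

variable {A : V → V → Prop} {S T : Set V} {u v : V}

lemma UStep.symm (h : UStep A T u v) : UStep A T v u :=
  ⟨h.2.1, h.1, h.2.2.1.symm, h.2.2.2.symm⟩

lemma ureach_symm (h : ReflTransGen (UStep A T) u v) : ReflTransGen (UStep A T) v u := by
  induction h with
  | refl => exact .refl
  | tail _ hs ih => exact .head hs.symm ih

lemma ureach_mono (hST : S ⊆ T) (h : ReflTransGen (UStep A S) u v) :
    ReflTransGen (UStep A T) u v :=
  ReflTransGen.mono (fun _ _ hs => ⟨hST hs.1, hST hs.2.1, hs.2.2⟩) _ _ h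

lemma ReachIn.ureach (h : ReachIn A T u v) : ReflTransGen (UStep A T) u v := by
  obtain ⟨-, h⟩ := h
  induction h with
  | refl => exact .refl
  | @tail b c _ hbc ih =>
    by_cases hb : b = c
    · exact hb ▸ ih
    · exact ih.tail ⟨hbc.1, hbc.2.1, hb, .inl hbc.2.2⟩

lemma uConnected_of_forall_ureach {Y B : Set V} (hYB : Y ⊆ B) (hY : UConnected A Y)
    (h : ∀ x ∈ B, ∃ q ∈ Y, ReflTransGen (UStep A B) x q) : UConnected A B := by
  refine ⟨hY.1.mono hYB, fun a ha b hb => ?_⟩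
  obtain ⟨qa, hqa, ha'⟩ := h a ha
  obtain ⟨qb, hqb, hb'⟩ := h b hb
  exact (ha'.trans (ureach_mono hYB (hY.2 qa hqa qb hqb))).trans (ureach_symm hb')

lemma uConnected_singleton (x : V) : UConnected A {x} :=
  ⟨singleton_nonempty x, by rintro _ rfl _ rfl; exact .refl⟩

lemma uConnected_pair {a b : V} (hab : a ≠ b) (h : A a b ∨ A b a) : UConnected A {a, b} := by
  refine uConnected_of_forall_ureach (singleton_subset_iff.mpr (mem_insert a {b}))
    (uConnected_singleton a) fun x hx => ⟨a, rfl, ?_⟩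
  rcases hx with rfl | rfl
  · exact .refl
  · exact .single ⟨by simp, by simp, hab.symm, h.symm⟩

end Underlying

/-- A directed sub-block without the requirement of three vertices; connected pairs are
examples. -/
def PreSubBlock (A : V → V → Prop) (Y : Set V) : Prop :=
  (∃ σ ∈ Y, ∀ y ∈ Y, ReachIn A Y y σ) ∧ UConnected A Y ∧ ∀ z ∈ Y, UConnected A (Y \ {z})

section PreSubBlock

variable {A : V → V → Prop} {Y : Set V}

lemma DirectedSubBlock.preSubBlock (h : DirectedSubBlock A Y) : PreSubBlock A Y :=
  ⟨h.1, h.2.2⟩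

lemma PreSubBlock.directedSubBlock (h : PreSubBlock A Y) (h3 : 3 ≤ Y.ncard) :
    DirectedSubBlock A Y :=
  ⟨h.1, h3, h.2⟩

lemma PreSubBlock.uConnected_diff (h : PreSubBlock A Y) (z : V) : UConnected A (Y \ {z}) := by
  by_cases hz : z ∈ Y
  · exact h.2.2 z hz
  · exact (sdiff_singleton_eq_self hz).symm ▸ h.2.1

lemma ConnectedPair.preSubBlock (h : ConnectedPair A Y) : PreSubBlock A Y := by
  obtain ⟨a, b, hab, rfl, harc⟩ := h
  refine ⟨?_, uConnected_pair hab harc, ?_⟩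
  · rcases harc with h | h
    · refine ⟨b, by simp, ?_⟩
      rintro y (rfl | rfl)
      exacts [.single (by simp) (by simp) h, .refl (by simp)]
    · refine ⟨a, by simp, ?_⟩
      rintro y (rfl | rfl)
      exacts [.refl (by simp), .single (by simp) (by simp) h]
  · rintro z (rfl | rfl)
    · exact (pair_sdiff_left hab).symm ▸ uConnected_singleton b
    · exact (pair_sdiff_right hab).symm ▸ uConnected_singleton a

end PreSubBlock

def IsAttachment (A : V → V → Prop) (Y : Set V) (σ j k : V) (F : Set V) : Prop :=
  k ∈ F ∧ Disjoint F Y ∧ (∀ f ∈ F, ReachIn A (Y ∪ F) f σ) ∧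
    ∀ f ∈ F, ∃ q ∈ Y \ {j}, ReflTransGen (UStep A ((Y ∪ F) \ {j})) f q

section Attachment

variable {A : V → V → Prop} {Y F : Set V} {σ j k : V}

lemma exists_isAttachment {w u : V} (hYσ : ∀ y ∈ Y, ReachIn A Y y σ) (hj : j ∈ Y)
    (hw : w ∈ Y \ {j}) (hk : k ∉ Y) (hkj : A k j) (huk : ReachIn A {j}ᶜ u k)
    (huw : ReachIn A {j}ᶜ u w) : ∃ F, IsAttachment A Y σ j k F := by
  set F := {x | x ∉ Y ∧ ReachIn A {j}ᶜ u x ∧ (ReachIn A {j}ᶜ x k ∨ ReachIn A {j}ᶜ x w)}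
  have hpath : ∀ x t, t = k ∨ t = w → ReachIn A {j}ᶜ u x → ReachIn A {j}ᶜ x t →
      ReachIn A ((Y ∪ F) \ {j}) x t := by
    intro x t ht hux hxt
    refine hxt.between.mono fun y hy => ⟨?_, hy.1.mem_right⟩
    by_cases hyY : y ∈ Y
    · exact .inl hyY
    · refine .inr ⟨hyY, hux.trans hy.1, ?_⟩
      rcases ht with rfl | rfl
      exacts [.inl hy.2, .inr hy.2]
  have hkF : k ∈ F := ⟨hk, huk, .inl (.refl huk.mem_right)⟩
  have hkσ : ReachIn A (Y ∪ F) k σ :=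
    (ReachIn.single (.inr hkF) (.inl hj) hkj).trans ((hYσ j hj).mono subset_union_left)
  have hwσ : ReachIn A (Y ∪ F) w σ := (hYσ w hw.1).mono subset_union_left
  have huk' := (hpath u k (.inl rfl) (.refl huk.1) huk).ureach
  have huw' := (hpath u w (.inr rfl) (.refl huk.1) huw).ureach
  refine ⟨F, hkF, disjoint_left.mpr fun _ hx => hx.1, fun f hf => ?_, fun f hf => ⟨w, hw, ?_⟩⟩
  · rcases hf.2.2 with hfk | hfw
    · exact ((hpath f k (.inl rfl) hf.2.1 hfk).mono sdiff_subset).trans hkσ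
    · exact ((hpath f w (.inr rfl) hf.2.1 hfw).mono sdiff_subset).trans hwσ
  · rcases hf.2.2 with hfk | hfw
    · exact (hpath f k (.inl rfl) hf.2.1 hfk).ureach.trans ((ureach_symm huk').trans huw')
    · exact (hpath f w (.inr rfl) hf.2.1 hfw).ureach

lemma IsAttachment.sdiff (hF : IsAttachment A Y σ j k F) (hσ : σ ∈ Y) {C : Set V} {z : V}
    (hCF : C ⊆ F) (hkC : k ∉ C)
    (hgate : ∀ x ∈ Y ∪ F, ∀ y ∈ C, (A x y ∨ A y x) → x ∉ C → x = z) :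
    IsAttachment A Y σ j k (F \ C) := by
  obtain ⟨hkF, hFY, hFσ, hFj⟩ := hF
  have hCY : ∀ x ∈ Y, x ∉ C := fun x hx hxC => disjoint_left.mp hFY (hCF hxC) hx
  have hmem : ∀ x ∈ Y ∪ F, x ∉ C → x ∈ Y ∪ F \ C := fun x hx hxC =>
    hx.imp_right fun h => ⟨h, hxC⟩
  refine ⟨⟨hkF, hkC⟩, hFY.mono_left sdiff_subset, fun f hf => ⟨.inr hf, ?_⟩, fun f hf => ?_⟩
  · exact (hFσ f hf.1).2.reroute hf.2 (hCY σ hσ)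
      (fun x y hxy hx hy => ⟨hmem x hxy.1 hx, hmem y hxy.2.1 hy, hxy.2.2⟩)
      (fun x y hxy hx hy => hgate x hxy.1 y hy (.inl hxy.2.2) hx)
      (fun x y hxy hx hy => hgate y hxy.2.1 x hx (.inr hxy.2.2) hy)
  · obtain ⟨q, hq, hfq⟩ := hFj f hf.1
    refine ⟨q, hq, hfq.reroute hf.2 (hCY q hq.1) ?_
      (fun x y hxy hx hy => hgate x hxy.1.1 y hy hxy.2.2.2 hx)
      (fun x y hxy hx hy => hgate y hxy.2.1.1 x hx hxy.2.2.2.symm hy)⟩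
    exact fun x y hxy hx hy =>
      ⟨⟨hmem x hxy.1.1 hx, hxy.1.2⟩, ⟨hmem y hxy.2.1.1 hy, hxy.2.1.2⟩, hxy.2.2⟩

/-- The vertices of `F` cut off from `Y` by deleting `z` are adjacent to nothing outside
themselves but `z`, so paths through them can be short-cut at `z`. -/
lemma IsAttachment.exists_ssubset (hF : IsAttachment A Y σ j k F) (hσ : σ ∈ Y) (hj : j ∈ Y)
    (hkj : A k j) (hY : ∀ z, UConnected A (Y \ {z})) {z : V}
    (hz : ¬ UConnected A ((Y ∪ F) \ {z})) : ∃ F' ⊂ F, IsAttachment A Y σ j k F' := by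
  set C := {f | f ∈ F ∧ f ≠ z ∧ ¬ ∃ q ∈ Y \ {z}, ReflTransGen (UStep A ((Y ∪ F) \ {z})) f q}
  have hcore : ∀ x ∈ Y ∪ F, x ≠ z → x ∉ C →
      ∃ q ∈ Y \ {z}, ReflTransGen (UStep A ((Y ∪ F) \ {z})) x q := by
    rintro x (hx | hx) hxz hxC
    · exact ⟨x, ⟨hx, hxz⟩, .refl⟩
    · by_contra h
      exact hxC ⟨hx, hxz, h⟩
  have hCne : C.Nonempty := by
    by_contra hC
    exact hz (uConnected_of_forall_ureach (sdiff_subset_sdiff_left subset_union_left) (hY z)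
      fun x hx => hcore x hx.1 hx.2 fun hxC => hC ⟨x, hxC⟩)
  have hgate : ∀ x ∈ Y ∪ F, ∀ y ∈ C, (A x y ∨ A y x) → x ∉ C → x = z := by
    intro x hx y hy hxy hxC
    by_contra hxz
    obtain ⟨q, hq, hxq⟩ := hcore x hx hxz hxC
    exact hy.2.2 ⟨q, hq, .head ⟨⟨.inr hy.1, hy.2.1⟩, ⟨hx, hxz⟩, fun h => hxC (h ▸ hy),
      hxy.symm⟩ hxq⟩
  have hkC : k ∉ C := by
    intro hkC
    apply hkC.2.2
    rcases eq_or_ne j z with rfl | hjz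
    · exact hF.2.2.2 k hF.1
    · exact ⟨j, ⟨hj, hjz⟩, .single ⟨⟨.inr hF.1, hkC.2.1⟩, ⟨.inl hj, hjz⟩,
        fun h => disjoint_left.mp hF.2.1 hF.1 (h ▸ hj), .inl hkj⟩⟩
  exact ⟨F \ C, sdiff_ssubset_left_iff.mpr (by rwa [inter_eq_right.mpr fun _ hx => hx.1]),
    hF.sdiff hσ (fun _ hx => hx.1) hkC hgate⟩

/-- A smallest attachment turns `Y` into a directed sub-block. -/
lemma PreSubBlock.exists_directedSubBlock_insert [Finite V] (hY : PreSubBlock A Y) {w u : V}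
    (hj : j ∈ Y) (hw : w ∈ Y \ {j}) (hk : k ∉ Y) (hkj : A k j) (huk : ReachIn A {j}ᶜ u k)
    (huw : ReachIn A {j}ᶜ u w) : ∃ B, DirectedSubBlock A B ∧ insert k Y ⊆ B := by
  obtain ⟨σ, hσ, hYσ⟩ := hY.1
  obtain ⟨F, hF, hmin⟩ := exists_min_image {F | IsAttachment A Y σ j k F} ncard (toFinite _)
    (exists_isAttachment hYσ hj hw hk hkj huk huw)
  have hconn : ∀ z, UConnected A ((Y ∪ F) \ {z}) := fun z => by
    by_contra hz
    obtain ⟨F', hF'F, hF'⟩ := hF.exists_ssubset hσ hj hkj hY.uConnected_diff hz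
    exact (ncard_lt_ncard hF'F).not_ge (hmin F' hF')
  obtain ⟨hkF, -, hFσ, hFj⟩ := hF
  have hsink : ∀ x ∈ Y ∪ F, ReachIn A (Y ∪ F) x σ := by
    rintro x (hx | hx)
    exacts [(hYσ x hx).mono subset_union_left, hFσ x hx]
  have hYF : UConnected A (Y ∪ F) := by
    refine uConnected_of_forall_ureach subset_union_left hY.2.1 ?_
    rintro x (hx | hx)
    · exact ⟨x, hx, .refl⟩
    · obtain ⟨q, hq, hxq⟩ := hFj x hx
      exact ⟨q, hq.1, ureach_mono sdiff_subset hxq⟩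
  have hkj' : k ≠ j := fun h => hk (h ▸ hj)
  have hkw : k ≠ w := fun h => hk (h ▸ hw.1)
  have h3 : 3 ≤ (Y ∪ F).ncard :=
    (ncard_eq_three.mpr ⟨k, j, w, hkj', hkw, Ne.symm hw.2, rfl⟩).ge.trans
      (ncard_le_ncard (insert_subset (.inr hkF) (insert_subset (.inl hj)
        (singleton_subset_iff.mpr (.inl hw.1)))))
  exact ⟨Y ∪ F, PreSubBlock.directedSubBlock ⟨⟨σ, .inl hσ, hsink⟩, hYF, fun z _ => hconn z⟩ h3,
    insert_subset (.inr hkF) subset_union_left⟩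

end Attachment

section Generation

variable {A : V → V → Prop} {W Y : Set V}

lemma PreSubBlock.exists_superset_of_exactStep [Finite V] (hY : PreSubBlock A Y) (hWY : W ⊆ Y)
    {W' : Set V} (h : ExactStep A W W') : ∃ Y', PreSubBlock A Y' ∧ W' ⊆ Y' := by
  obtain ⟨k, -, rfl, j, hj, hkj, hdp⟩ := h
  obtain ⟨u, huk, w, hw, huw⟩ := not_dynPart_singleton_iff.mp hdp
  by_cases hkY : k ∈ Y
  · exact ⟨Y, hY, union_subset hWY (singleton_subset_iff.mpr hkY)⟩
  · obtain ⟨B, hB, hYB⟩ :=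
      hY.exists_directedSubBlock_insert (hWY hj) ⟨hWY hw.1, hw.2⟩ hkY hkj huk huw
    rw [union_singleton]
    exact ⟨B, hB.preSubBlock, (insert_subset_insert hWY).trans hYB⟩

lemma GeneratedFromPair.exists_directedSubBlock_superset [Finite V]
    (h : GeneratedFromPair A W) (h3 : 3 ≤ W.ncard) : ∃ U, DirectedSubBlock A U ∧ W ⊆ U := by
  obtain ⟨P, hP, hchain⟩ := h
  obtain ⟨Y, hY, hWY⟩ : ∃ Y, PreSubBlock A Y ∧ W ⊆ Y := by
    clear h3
    induction hchain with
    | refl => exact ⟨P, hP.preSubBlock, subset_rfl⟩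
    | tail _ hstep ih =>
      obtain ⟨Y, hY, hWY⟩ := ih
      exact hY.exists_superset_of_exactStep hWY hstep
  exact ⟨Y, hY.directedSubBlock (h3.trans (ncard_le_ncard hWY)), hWY⟩

lemma exists_exactStep_of_ssubset {Wt : Set V} {i : V} (hi : ∀ v ∈ W, ReachIn A W v i)
    (hconn : ∀ j ∈ W, UConnected A (W \ {j})) (hWt : Wt ⊂ W) (hiWt : i ∈ Wt)
    (h2 : 1 < Wt.ncard) : ∃ k ∈ W \ Wt, ExactStep A Wt (Wt ∪ {k}) := by
  obtain ⟨v, hvW, hvWt⟩ := exists_of_ssubset hWt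
  obtain ⟨k₀, hk₀, j, hj, hk₀j⟩ := (hi v hvW).2.exists_step_into hvWt hiWt
  have hsub : W \ {j} ⊆ {j}ᶜ := fun _ hx => hx.2
  set X := InSet A (W \ {j}) (Wt \ {j})
  suffices ∃ m ∈ W \ Wt, A m j ∧ ∃ q ∈ X, ReachIn A (W \ {j}) q m by
    obtain ⟨m, hm, hmj, q, ⟨t, ht, hqt⟩, hqm⟩ := this
    exact ⟨m, hm, m, hm.2, rfl, j, hj, hmj,
      not_dynPart_singleton_iff.mpr ⟨q, hqm.mono hsub, t, ht, hqt.mono hsub⟩⟩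
  have hk₀W : k₀ ∈ W \ {j} := ⟨hk₀j.1, fun h => hk₀ (h ▸ hj)⟩
  by_cases hk₀X : k₀ ∈ X
  · exact ⟨k₀, ⟨hk₀W.1, hk₀⟩, hk₀j.2.2, k₀, hk₀X, .refl hk₀W⟩
  set Z := (W \ {j}) \ X
  have hX : ∀ x ∈ W \ {j}, x ∉ Z → x ∈ X := fun x hx hxZ => by_contra fun h => hxZ ⟨hx, h⟩
  obtain ⟨w₀, hw₀, hw₀j⟩ := exists_ne_of_one_lt_ncard h2 j
  have hw₀X : w₀ ∈ X := ⟨w₀, ⟨hw₀, hw₀j⟩, .refl ⟨hWt.subset hw₀, hw₀j⟩⟩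
  obtain ⟨q, hqZ, p, hpZ, hqp⟩ := ((hconn j (hWt.subset hj)).2 w₀ ⟨hWt.subset hw₀, hw₀j⟩ k₀ hk₀W)
    |>.exists_step_into (T := Z) (fun h => h.2 hw₀X) ⟨hk₀W, hk₀X⟩
  have hqX : q ∈ X := hX q hqp.1 hqZ
  have hpq : A q p :=
    hqp.2.2.2.resolve_right fun h => hpZ.2 (mem_inSet_of_stepIn ⟨hpZ.1, hqp.1, h⟩ hqX)
  -- a path from `p` to the sink can leave `Z` only through `j`
  have hiZ : i ∉ Z := fun h => h.2 ⟨i, ⟨hiWt, h.1.2⟩, .refl h.1⟩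
  obtain ⟨m, y, hpm, hy, hmy⟩ := (hi p hpZ.1.1).exists_arc_out hpZ hiZ
  have hmZ := hpm.mem_right
  obtain rfl : y = j := by
    by_contra hyj
    exact hmZ.2 (mem_inSet_of_stepIn ⟨hmZ.1, ⟨hy.1, hyj⟩, hmy⟩ (hX y ⟨hy.1, hyj⟩ hy.2))
  exact ⟨m, ⟨hmZ.1.1, fun hmWt => hmZ.2 ⟨m, ⟨hmWt, hmZ.1.2⟩, .refl hmZ.1⟩⟩, hmy, q, hqX,
    ReachIn.head ⟨hqp.1, hpZ.1, hpq⟩ (hpm.mono fun _ hx => hx.1)⟩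

lemma reflTransGen_exactStep_of_subset [Finite V] {i : V} (hi : ∀ v ∈ W, ReachIn A W v i)
    (hconn : ∀ j ∈ W, UConnected A (W \ {j})) {Wt : Set V} (hWt : Wt ⊆ W) (hiWt : i ∈ Wt)
    (h2 : 1 < Wt.ncard) : ReflTransGen (ExactStep A) Wt W := by
  induction hn : (W \ Wt).ncard generalizing Wt with
  | zero =>
    rw [hWt.antisymm (sdiff_eq_empty.mp ((ncard_eq_zero (toFinite _)).mp hn))]
  | succ n ih =>
    have hWt' : Wt ⊂ W := hWt.ssubset_of_ne fun h => by simp [h] at hn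
    obtain ⟨k, hk, hstep⟩ := exists_exactStep_of_ssubset hi hconn hWt' hiWt h2
    refine .head hstep (ih (union_subset hWt (singleton_subset_iff.mpr hk.1)) (.inl hiWt)
      (h2.trans_le (ncard_le_ncard subset_union_left)) ?_)
    rw [← sdiff_sdiff, ncard_sdiff_singleton_of_mem hk, hn, Nat.add_sub_cancel]

lemma DirectedSubBlock.generatedFromPair [Finite V] (hW : DirectedSubBlock A W) :
    GeneratedFromPair A W := by
  obtain ⟨⟨i, hiW, hi⟩, h3, -, hconn⟩ := hW
  obtain ⟨v, hvW, hvi⟩ := exists_ne_of_one_lt_ncard (by omega : 1 < W.ncard) i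
  obtain ⟨x, hx, q, hq, hxi⟩ := (hi v hvW).2.exists_step_into (T := {i}) hvi rfl
  rw [mem_singleton_iff.mp hq] at hxi
  exact ⟨{x, i}, ⟨x, i, hx, rfl, .inl hxi.2.2⟩, reflTransGen_exactStep_of_subset hi hconn
    (pair_subset hxi.1 hiW) (mem_insert_of_mem _ rfl) (by rw [ncard_pair hx]; omega)⟩

end Generation

theorem stmt11_general [Fintype V] (A : V → V → Prop) (m : ℕ)
    (hm_mem : ∃ W : Set V,
      (ConnectedPair A W ∨ (3 ≤ W.ncard ∧ GeneratedFromPair A W)) ∧ W.ncard = m)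
    (hm_max : ∀ W : Set V,
      (ConnectedPair A W ∨ (3 ≤ W.ncard ∧ GeneratedFromPair A W)) → W.ncard ≤ m) :
    ((∃ X : Set V, DirectedSubBlock A X) →
      ∃ U : Set V, TransmissionBlock A U ∧ U.ncard = m ∧
        ∀ U' : Set V, TransmissionBlock A U' → U'.ncard ≤ m) ∧
    ((¬ ∃ X : Set V, DirectedSubBlock A X) → m = 2) := by
  obtain ⟨W, hW, rfl⟩ := hm_mem
  have hpair : ∀ {P : Set V}, ConnectedPair A P → P.ncard = 2 := by
    rintro _ ⟨a, b, hab, rfl, -⟩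
    exact ncard_pair hab
  have hle : ∀ U, DirectedSubBlock A U → U.ncard ≤ W.ncard := fun U hU =>
    hm_max U (.inr ⟨hU.2.1, hU.generatedFromPair⟩)
  refine ⟨fun ⟨X, hX⟩ => ?_, fun hno => ?_⟩
  · obtain ⟨U, hU, hUmax⟩ := exists_max_image {U | DirectedSubBlock A U} ncard (toFinite _) ⟨X, hX⟩
    have hWU : W.ncard ≤ U.ncard := by
      rcases hW with hP | ⟨h3, hgen⟩
      · exact (hpair hP).trans_le (by have := hU.2.1; omega)
      · obtain ⟨U', hU', hWU'⟩ := hgen.exists_directedSubBlock_superset h3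
        exact (ncard_le_ncard hWU').trans (hUmax U' hU')
    exact ⟨U, ⟨hU, fun U' hUU' hU' => (ncard_lt_ncard hUU').not_ge (hUmax U' hU')⟩,
      (hle U hU).antisymm hWU, fun U' hU' => hle U' hU'.1⟩
  · rcases hW with hP | ⟨h3, hgen⟩
    · exact hpair hP
    · obtain ⟨U, hU, -⟩ := hgen.exists_directedSubBlock_superset h3
      exact absurd ⟨U, hU⟩ hno

/-- Theorem 3.3, combinatorial form: `m` is the maximum of `|W|` over all
`W` that are connected pairs or generable from a connected pair. If `D` has a directed
sub-block then `m` equals the maximum cardinality of a transmission block; otherwise `m = 2`. -/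
theorem stmt11 [Fintype V] (A : V → V → Prop) (hirr : ∀ v : V, ¬ A v v)
    (hA : ∃ u v : V, A u v) (m : ℕ)
    (hm_mem : ∃ W : Set V,
      (ConnectedPair A W ∨ (3 ≤ W.ncard ∧ GeneratedFromPair A W)) ∧ W.ncard = m)
    (hm_max : ∀ W : Set V,
      (ConnectedPair A W ∨ (3 ≤ W.ncard ∧ GeneratedFromPair A W)) → W.ncard ≤ m) :
    ((∃ X : Set V, DirectedSubBlock A X) →
      ∃ U : Set V, TransmissionBlock A U ∧ U.ncard = m ∧
        ∀ U' : Set V, TransmissionBlock A U' → U'.ncard ≤ m) ∧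
    ((¬ ∃ X : Set V, DirectedSubBlock A X) → m = 2) :=
  stmt11_general A m hm_mem hm_max
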